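/- arXiv:1011.6393 — 5 statements merged into one kernel-verified Lean document; each statement's English description precedes it below -/
import Mathlib

section
/- Let 1 → L → G → H → 1 be an exact sequence of profinite groups with L a free Z_p-module of finite rank d, H finite, and H acting trivially on L. Then there exists a free Z_p-module L' of rank d and a surjective continuous morphism G → L'. -/
/-!
The kernel `K ≅ ℤ_p^d` is central of finite index `n`, so by the transfer `g ↦ g ^ n` is a
continuous homomorphism `G → K`. Its image is a compact, hence closed, subgroup of `ℤ_p^d`;
since `ℕ` is dense in `ℤ_p` it is a `ℤ_p`-submodule, and it contains `n • ℤ_p^d`, so it is free of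
rank `d`. A basis identifies it with `ℤ_p^d`, homeomorphically because `ℤ_p^d` is compact.
-/

open Module Subgroup MonoidHom
open scoped IsMulCommutative

namespace Subgroup

variable {G : Type*} [Group G] {K : Subgroup G}

theorem conj_eq_self_of_mem_of_le_center (hK : K ≤ center G) (x g₀ : G)
    (hx : g₀⁻¹ * x * g₀ ∈ K) : g₀⁻¹ * x * g₀ = x := by
  rw [← mul_right_inj, ← (hK hx).comm, mul_inv_cancel_right]

theorem pow_index_mul_pow_index_of_le_center (hK : K ≤ center G) [K.FiniteIndex] (a b : G) :
    (a * b) ^ K.index = a ^ K.index * b ^ K.index := by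
  have key (g : G) : ((transfer (inclusion hK) g : center G) : G) = g ^ K.index :=
    congrArg Subtype.val <|
      transfer_eq_pow _ g fun k => conj_eq_self_of_mem_of_le_center hK (g ^ k)
  rw [← key, ← key, ← key, map_mul, Subgroup.coe_mul]

noncomputable def powIndexHom (hK : K ≤ center G) [K.FiniteIndex] : G →* K where
  toFun g :=
    ⟨g ^ K.index, transfer_eq_pow_aux g fun k => conj_eq_self_of_mem_of_le_center hK (g ^ k)⟩
  map_one' := Subtype.ext (one_pow _)
  map_mul' a b := Subtype.ext (pow_index_mul_pow_index_of_le_center hK a b)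

@[simp]
theorem powIndexHom_apply_coe (hK : K ≤ center G) [K.FiniteIndex] (k : K) :
    powIndexHom hK k = k ^ K.index := rfl

end Subgroup

theorem AddSubgroup.padicInt_smul_mem_of_isClosed {p : ℕ} [Fact p.Prime] {V : Type*}
    [AddCommGroup V] [Module ℤ_[p] V] [TopologicalSpace V] [ContinuousSMul ℤ_[p] V]
    {S : AddSubgroup V} (hS : IsClosed (S : Set V)) (c : ℤ_[p]) {x : V} (hx : x ∈ S) :
    c • x ∈ S := by
  have hclosed : IsClosed {t : ℤ_[p] | t • x ∈ S} :=
    hS.preimage (continuous_id.smul continuous_const)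
  have hnat : Set.range (Nat.cast : ℕ → ℤ_[p]) ⊆ {t | t • x ∈ S} := by
    rintro _ ⟨k, rfl⟩
    simpa [Nat.cast_smul_eq_nsmul] using S.nsmul_mem hx k
  exact hclosed.closure_subset_iff.2 hnat
    ((PadicInt.denseRange_natCast (p := p)).closure_range ▸ Set.mem_univ c)

namespace Submodule

variable {R : Type*} [CommRing R] [IsDomain R] [IsPrincipalIdealRing R] {d : ℕ}
  {M : Submodule R (Fin d → R)} {r : R}

theorem finrank_eq_of_smul_mem (hr : r ≠ 0) (hM : ∀ v, r • v ∈ M) : finrank R M = d := by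
  refine le_antisymm (by simpa using M.finrank_le) ?_
  let smulInto : (Fin d → R) →ₗ[R] M := (LinearMap.lsmul R _ r).codRestrict M hM
  have hinj : Function.Injective smulInto := fun a b hab =>
    smul_right_injective _ hr (congrArg Subtype.val hab)
  simpa using LinearMap.finrank_le_finrank_of_injective hinj

theorem nonempty_continuousLinearEquiv_of_smul_mem [TopologicalSpace R] [IsTopologicalRing R]
    [CompactSpace R] [T2Space R] (hr : r ≠ 0) (hM : ∀ v, r • v ∈ M) :
    Nonempty (M ≃L[R] (Fin d → R)) := by
  let β : M ≃ₗ[R] (Fin d → R) := (finBasisOfFinrankEq R M (finrank_eq_of_smul_mem hr hM)).equivFun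
  let βsymm_homeo : (Fin d → R) ≃ₜ M :=
    (IsModuleTopology.continuous_of_linearMap β.symm.toLinearMap).homeoOfEquivCompactToT2
      (f := β.symm.toEquiv)
  exact ⟨{ β with continuous_toFun := βsymm_homeo.symm.continuous
                  continuous_invFun := βsymm_homeo.continuous }⟩

end Submodule

theorem exists_continuous_surjective_of_pow_mem_range {p : ℕ} [Fact p.Prime] {d : ℕ}
    {G : Type*} [Group G] [TopologicalSpace G] [CompactSpace G]
    (f : G →* Multiplicative (Fin d → ℤ_[p])) (hf : Continuous f) {n : ℕ} (hn : n ≠ 0)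
    (hpow : ∀ x, x ^ n ∈ f.range) :
    ∃ ψ : G →* Multiplicative (Fin d → ℤ_[p]), Continuous ψ ∧ Function.Surjective ψ := by
  let S : AddSubgroup (Fin d → ℤ_[p]) := f.range.toAddSubgroup'
  have hS : IsClosed (S : Set (Fin d → ℤ_[p])) := (isCompact_range hf).isClosed
  let M : Submodule ℤ_[p] (Fin d → ℤ_[p]) :=
    { S with smul_mem' := fun c _ hx => AddSubgroup.padicInt_smul_mem_of_isClosed hS c hx }
  have hM (v : Fin d → ℤ_[p]) : (n : ℤ_[p]) • v ∈ M := by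
    rw [Nat.cast_smul_eq_nsmul]
    change Multiplicative.ofAdd (n • v) ∈ f.range
    exact ofAdd_nsmul n v ▸ hpow _
  obtain ⟨β⟩ := Submodule.nonempty_continuousLinearEquiv_of_smul_mem (Nat.cast_ne_zero.2 hn) hM
  let toM : G →* Multiplicative M :=
    { toFun g := .ofAdd ⟨(f g).toAdd, g, rfl⟩
      map_one' := Subtype.ext (congrArg Multiplicative.toAdd f.map_one)
      map_mul' x y := Subtype.ext (congrArg Multiplicative.toAdd (f.map_mul x y)) }
  have htoM : Function.Surjective toM := fun ⟨_, g, hg⟩ =>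
    ⟨g, Subtype.ext (congrArg Multiplicative.toAdd hg)⟩
  refine ⟨(AddMonoidHom.toMultiplicative β.toLinearEquiv.toAddMonoidHom).comp toM, ?_,
    β.surjective.comp htoM⟩
  exact continuous_ofAdd.comp (β.continuous.comp (hf.subtype_mk _))

theorem surjection_onto_free_of_extension_general (p : ℕ) [Fact p.Prime] (d : ℕ)
    (G : Type*) [Group G] [TopologicalSpace G] [IsTopologicalGroup G]
    [CompactSpace G]
    (H : Type*) [Group H] [Finite H]
    (π : G →* H)
    (e : π.ker ≃* Multiplicative (Fin d → ℤ_[p]))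
    (hecont : Continuous e)
    (htriv : ∀ (g : G) (k : π.ker), g * (k : G) * g⁻¹ = (k : G)) :
    ∃ ψ : G →* Multiplicative (Fin d → ℤ_[p]),
      Continuous ψ ∧ Function.Surjective ψ := by
  have hcentral : π.ker ≤ center G := fun k hk =>
    mem_center_iff.2 fun g => mul_inv_eq_iff_eq_mul.1 (htriv g ⟨k, hk⟩)
  let f : G →* Multiplicative (Fin d → ℤ_[p]) := e.toMonoidHom.comp (powIndexHom hcentral)
  have hf : Continuous f := hecont.comp ((continuous_pow _).subtype_mk _)
  exact exists_continuous_surjective_of_pow_mem_range f hf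
    (FiniteIndex.index_ne_zero (H := π.ker)) fun x => ⟨e.symm x, by simp [f]⟩

/-- Let `1 → L → G → H → 1` be an exact sequence of profinite groups with `L` a free
`ℤ_p`-module of finite rank `d` (given by an isomorphism-and-homeomorphism
`e : ker π ≃ ℤ_p^d`), `H` finite, and `H` acting trivially on `L` (i.e. conjugation by any
element of `G` is trivial on `L`).  Then there exists a free `ℤ_p`-module `L'` of rank `d`
and a surjective continuous morphism `G → L'`. -/
theorem surjection_onto_free_of_extension (p : ℕ) [Fact p.Prime] (d : ℕ)
    (G : Type*) [Group G] [TopologicalSpace G] [IsTopologicalGroup G]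
    [CompactSpace G] [TotallyDisconnectedSpace G]
    (H : Type*) [Group H] [Finite H] [TopologicalSpace H] [DiscreteTopology H]
    (π : G →* H) (hπcont : Continuous π) (hπsurj : Function.Surjective π)
    (e : π.ker ≃* Multiplicative (Fin d → ℤ_[p]))
    (hecont : Continuous e) (hesymm : Continuous e.symm)
    (htriv : ∀ (g : G) (k : π.ker), g * (k : G) * g⁻¹ = (k : G)) :
    ∃ ψ : G →* Multiplicative (Fin d → ℤ_[p]),
      Continuous ψ ∧ Function.Surjective ψ :=
  surjection_onto_free_of_extension_general p d G H π e hecont htriv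
end

section
/- Let F be a field of characteristic different from p whose group μ_{p^∞}(F) of p-power roots of unity is finite. Then the torsion subgroup of the p-adic completion of F*, i.e. the inverse limit over n of F*/(F*)^{p^n}, is equal to the image of μ_{p^∞}(F). -/
/-!
Each layer `F*/(F*)^{p^n}` is killed by `p^n`, so a torsion element `f` of the completion, killed
by some `k ≠ 0`, is killed by `p^m` with `m = v_p(k)`. A representative `a` of `f (n + m)` then has
`a^{p^m} = b^{p^{n+m}}`, so `a / b^{p^n}` is a `p^m`-th root of unity representing `f n`. Only
finitely many roots of unity are available, so one of them, `ζ`, represents `f N` for infinitely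
many `N`, and by compatibility of the family it represents every `f n`.
-/

/-- The transition maps of the system `n ↦ M/M^{p^n}`: `p^(n+1)`-th powers are
`p^n`-th powers. -/
theorem pow_range_le {M : Type*} [CommGroup M] (p n : ℕ) :
    (powMonoidHom (p ^ (n + 1)) : M →* M).range ≤ (powMonoidHom (p ^ n) : M →* M).range := by
  rintro x ⟨y, rfl⟩
  exact ⟨y ^ p, by simp only [powMonoidHom_apply, ← pow_mul, ← pow_succ']⟩

/-- The `p`-adic completion of an abelian group `M`, i.e. the inverse limit
`lim_n M/M^{p^n}` with transition maps induced by the identity, realized as a subgroup of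
the product `∀ n, M/M^{p^n}`. -/
def padicCompletion (p : ℕ) (M : Type*) [CommGroup M] :
    Subgroup (∀ n : ℕ, M ⧸ (powMonoidHom (p ^ n) : M →* M).range) where
  carrier := {f | ∀ n, QuotientGroup.map _ _ (MonoidHom.id M)
      (fun x hx => by simpa using pow_range_le p n hx) (f (n + 1)) = f n}
  mul_mem' := by
    intro a b ha hb n
    simp only [Pi.mul_apply, map_mul, ha n, hb n]
  one_mem' := by
    intro n
    simp only [Pi.one_apply, map_one]
  inv_mem' := by
    intro a ha n
    simp only [Pi.inv_apply, map_inv, ha n]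

theorem QuotientGroup.pow_eq_one_of_range_powMonoidHom {M : Type*} [CommGroup M] (n : ℕ)
    (x : M ⧸ (powMonoidHom n : M →* M).range) : x ^ n = 1 := by
  induction x using QuotientGroup.induction_on with
  | H a => exact (QuotientGroup.eq_one_iff _).2 ⟨a, rfl⟩

theorem pow_ordProj_eq_one {G : Type*} [Monoid G] {p : ℕ} (hp : p.Prime) {x : G} {k n : ℕ}
    (hk : k ≠ 0) (hxk : x ^ k = 1) (hxp : x ^ p ^ n = 1) : x ^ ordProj[p] k = 1 := by
  obtain ⟨j, -, hj⟩ := (Nat.dvd_prime_pow hp).1 (orderOf_dvd_of_pow_eq_one hxp)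
  have hjk : j ≤ k.factorization p := by
    rw [← hp.pow_dvd_iff_le_factorization hk, ← hj]
    exact orderOf_dvd_of_pow_eq_one hxk
  exact orderOf_dvd_iff_pow_eq_one.1 (hj ▸ pow_dvd_pow p hjk)

namespace padicCompletion

variable {M : Type*} [CommGroup M] {p : ℕ}
  {f : ∀ n : ℕ, M ⧸ (powMonoidHom (p ^ n) : M →* M).range}

theorem apply_eq_mk_of_succ (hf : f ∈ padicCompletion p M) {n : ℕ} {a : M}
    (h : f (n + 1) = QuotientGroup.mk a) : f n = QuotientGroup.mk a := by
  rw [← hf n, h]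
  rfl

theorem apply_eq_mk_of_le (hf : f ∈ padicCompletion p M) {m n : ℕ} (hmn : m ≤ n) {a : M}
    (h : f n = QuotientGroup.mk a) : f m = QuotientGroup.mk a := by
  induction n, hmn using Nat.le_induction with
  | base => exact h
  | succ n _ ih => exact ih (apply_eq_mk_of_succ hf h)

theorem exists_rootOfUnity_eq_mk (hf : f ∈ padicCompletion p M) {m : ℕ}
    (hfm : ∀ n, f n ^ p ^ m = 1) (n : ℕ) : ∃ ζ : M, ζ ^ p ^ m = 1 ∧ f n = QuotientGroup.mk ζ := by
  obtain ⟨a, ha⟩ := QuotientGroup.mk_surjective (f (n + m))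
  obtain ⟨b, hb⟩ : a ^ p ^ m ∈ (powMonoidHom (p ^ (n + m)) : M →* M).range := by
    rw [← QuotientGroup.eq_one_iff, QuotientGroup.mk_pow, ha]
    exact hfm (n + m)
  refine ⟨a / b ^ p ^ n, ?_, ?_⟩
  · rw [div_pow, ← pow_mul, ← pow_add]
    exact div_eq_one.2 hb.symm
  · rw [apply_eq_mk_of_le hf (Nat.le_add_right n m) ha.symm, QuotientGroup.eq, inv_mul_eq_div,
      div_div_cancel_left]
    exact inv_mem ⟨b, rfl⟩

theorem exists_forall_eq_mk_of_finite (hf : f ∈ padicCompletion p M) {S : Set M}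
    (hS : S.Finite) (h : ∀ n, ∃ ζ ∈ S, f n = QuotientGroup.mk ζ) :
    ∃ ζ ∈ S, ∀ n, f n = QuotientGroup.mk ζ := by
  choose g hgS hg using h
  have := hS.to_subtype
  obtain ⟨⟨ζ, hζS⟩, hinf⟩ := Finite.exists_infinite_fiber fun n => (⟨g n, hgS n⟩ : S)
  have hfreq : ∃ᶠ N in Filter.atTop, g N = ζ := by
    refine Nat.frequently_atTop_iff_infinite.2 (Set.infinite_coe_iff.1 ?_)
    simpa [Set.preimage, Subtype.ext_iff] using hinf
  refine ⟨ζ, hζS, fun n => ?_⟩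
  obtain ⟨N, hN, hnN⟩ := (hfreq.and_eventually (Filter.eventually_ge_atTop n)).exists
  exact apply_eq_mk_of_le hf hnN (hN ▸ hg N)

end padicCompletion

theorem torsion_of_padicCompletion_eq_rootsOfUnity_general (p : ℕ) [Fact p.Prime]
    (F : Type*) [Field F]
    (hfin : {ζ : Fˣ | ∃ n : ℕ, ζ ^ p ^ n = 1}.Finite)
    (f : ∀ n : ℕ, Fˣ ⧸ (powMonoidHom (p ^ n) : Fˣ →* Fˣ).range)
    (hf : f ∈ padicCompletion p Fˣ) :
    (∃ k : ℕ, k ≠ 0 ∧ f ^ k = 1) ↔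
      ∃ ζ : Fˣ, (∃ n : ℕ, ζ ^ p ^ n = 1) ∧
        f = fun n => (QuotientGroup.mk ζ : Fˣ ⧸ (powMonoidHom (p ^ n) : Fˣ →* Fˣ).range) := by
  constructor
  · rintro ⟨k, hk, hfk⟩
    have hfm (n : ℕ) : f n ^ ordProj[p] k = 1 :=
      pow_ordProj_eq_one Fact.out hk (congrFun hfk n)
        (QuotientGroup.pow_eq_one_of_range_powMonoidHom _ (f n))
    have hlift (n : ℕ) : ∃ ζ ∈ {ζ : Fˣ | ∃ n : ℕ, ζ ^ p ^ n = 1}, f n = QuotientGroup.mk ζ := by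
      obtain ⟨ζ, hζ, hfζ⟩ := padicCompletion.exists_rootOfUnity_eq_mk hf hfm n
      exact ⟨ζ, ⟨_, hζ⟩, hfζ⟩
    obtain ⟨ζ, hζ, hfζ⟩ := padicCompletion.exists_forall_eq_mk_of_finite hf hfin hlift
    exact ⟨ζ, hζ, funext hfζ⟩
  · rintro ⟨ζ, ⟨n, hζ⟩, rfl⟩
    refine ⟨p ^ n, pow_ne_zero n (Fact.out : p.Prime).ne_zero, funext fun m => ?_⟩
    rw [Pi.pow_apply, ← QuotientGroup.mk_pow, hζ, QuotientGroup.mk_one, Pi.one_apply]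

/-- Let `F` be a field of characteristic different from `p` whose group `μ_{p^∞}(F)` of
`p`-power roots of unity is finite.  Then the torsion subgroup of the `p`-adic completion
of `F*` is exactly the image of `μ_{p^∞}(F)` under the diagonal map. -/
theorem torsion_of_padicCompletion_eq_rootsOfUnity (p : ℕ) [Fact p.Prime]
    (F : Type*) [Field F] (hchar : (p : F) ≠ 0)
    (hfin : {ζ : Fˣ | ∃ n : ℕ, ζ ^ p ^ n = 1}.Finite)
    (f : ∀ n : ℕ, Fˣ ⧸ (powMonoidHom (p ^ n) : Fˣ →* Fˣ).range)
    (hf : f ∈ padicCompletion p Fˣ) :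
    (∃ k : ℕ, k ≠ 0 ∧ f ^ k = 1) ↔
      ∃ ζ : Fˣ, (∃ n : ℕ, ζ ^ p ^ n = 1) ∧
        f = fun n => (QuotientGroup.mk ζ : Fˣ ⧸ (powMonoidHom (p ^ n) : Fˣ →* Fˣ).range) :=
  torsion_of_padicCompletion_eq_rootsOfUnity_general p F hfin f hf
end

section
/- If F is a field of characteristic different from p whose group of p-power roots of unity is infinite (hence p-divisible), then the torsion subgroup of the p-adic completion lim_n F*/(F*)^{p^n} of F* is trivial. -/
/-!
An element of the completion killed by `k = p^a m` (`p ∤ m`) has its level-`(n + a)` component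
killed by `p^a`. Lifting it to `x ∈ F*`, this says `x^{p^a} = v^{p^{n+a}}`, so `x / v^{p^n}` is a
`p^a`-th root of unity. Since the `p`-power roots of unity form an infinite subgroup of the
locally cyclic group `F*`, they are `p`-divisible, so `x` is a `p^n`-th power and the level-`n`
component vanishes.
-/

theorem pow_prime_pow_factorization_eq_one {G : Type*} [Monoid G] {p : ℕ} (hp : p.Prime)
    {g : G} {k N : ℕ} (hk : k ≠ 0) (hgk : g ^ k = 1) (hgN : g ^ p ^ N = 1) :
    g ^ p ^ k.factorization p = 1 := by
  have hgcd : g ^ k.gcd (p ^ N) = 1 := pow_gcd_eq_one.mpr ⟨hgk, hgN⟩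
  obtain ⟨b, -, hb⟩ := (Nat.dvd_prime_pow hp).mp (Nat.gcd_dvd_right k (p ^ N))
  have hbk : b ≤ k.factorization p :=
    (hp.pow_dvd_iff_le_factorization hk).mp (hb ▸ Nat.gcd_dvd_left k (p ^ N))
  obtain ⟨c, hc⟩ := pow_dvd_pow p hbk
  rw [hc, pow_mul, ← hb, hgcd, one_pow]

theorem quotient_range_powMonoidHom_pow_eq_one {M : Type*} [CommGroup M] (m : ℕ)
    (q : M ⧸ (powMonoidHom m : M →* M).range) : q ^ m = 1 := by
  obtain ⟨x, rfl⟩ := QuotientGroup.mk_surjective q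
  exact (QuotientGroup.eq_one_iff _).mpr ⟨x, rfl⟩

theorem padicCompletion.apply_eq_of_apply_add_eq {M : Type*} [CommGroup M] {p : ℕ}
    {f : ∀ n : ℕ, M ⧸ (powMonoidHom (p ^ n) : M →* M).range} (hf : f ∈ padicCompletion p M)
    (n a : ℕ) {x : M} (hx : f (n + a) = x) : f n = x := by
  induction a with
  | zero => exact hx
  | succ a ih => exact ih (by rw [← hf (n + a), show f (n + a + 1) = x from hx]; rfl)

section Divisible

variable {M : Type*} [CommGroup M] {p : ℕ}

theorem exists_pow_eq_of_pow_mem_range_powMonoidHom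
    (hdiv : ∀ a n : ℕ, ∀ w : M, w ^ p ^ a = 1 → ∃ η : M, η ^ p ^ n = w) {n a : ℕ} {x : M}
    (hx : x ^ p ^ a ∈ (powMonoidHom (p ^ (n + a)) : M →* M).range) :
    ∃ y : M, y ^ p ^ n = x := by
  obtain ⟨v, hv⟩ := hx
  obtain ⟨η, hη⟩ := hdiv a n (x * (v ^ p ^ n)⁻¹) <| by
    rw [mul_pow, inv_pow, ← pow_mul, ← pow_add]
    exact mul_inv_eq_one.mpr hv.symm
  exact ⟨η * v, by rw [mul_pow, hη, inv_mul_cancel_right]⟩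

theorem padicCompletion.eq_one_of_pow_eq_one (hp : p.Prime)
    (hdiv : ∀ a n : ℕ, ∀ w : M, w ^ p ^ a = 1 → ∃ η : M, η ^ p ^ n = w)
    {f : ∀ n : ℕ, M ⧸ (powMonoidHom (p ^ n) : M →* M).range} (hf : f ∈ padicCompletion p M)
    {k : ℕ} (hk : k ≠ 0) (hfk : f ^ k = 1) : f = 1 := by
  funext n
  set a := k.factorization p
  obtain ⟨x, hx⟩ := QuotientGroup.mk_surjective (f (n + a))
  have hxa : ((x ^ p ^ a : M) : M ⧸ (powMonoidHom (p ^ (n + a)) : M →* M).range) = 1 := by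
    rw [QuotientGroup.mk_pow, hx]
    exact pow_prime_pow_factorization_eq_one hp hk (congrFun hfk (n + a))
      (quotient_range_powMonoidHom_pow_eq_one _ _)
  obtain ⟨y, rfl⟩ :=
    exists_pow_eq_of_pow_mem_range_powMonoidHom hdiv ((QuotientGroup.eq_one_iff _).mp hxa)
  rw [padicCompletion.apply_eq_of_apply_add_eq hf n a hx.symm]
  exact (QuotientGroup.eq_one_iff _).mpr ⟨y, rfl⟩

end Divisible

section RootsOfUnity

variable {F : Type*} [Field F] {p : ℕ}

theorem exists_isPrimitiveRoot_prime_pow (hp : p.Prime)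
    (hinf : {ζ : Fˣ | ∃ n : ℕ, ζ ^ p ^ n = 1}.Infinite) (c : ℕ) :
    ∃ ξ : Fˣ, IsPrimitiveRoot ξ (p ^ c) := by
  have : NeZero (p ^ c) := ⟨pow_ne_zero c hp.ne_zero⟩
  have hfin : (rootsOfUnity (p ^ c) F : Set Fˣ).Finite :=
    Set.finite_coe_iff.mp (inferInstanceAs (Finite (rootsOfUnity (p ^ c) F)))
  obtain ⟨ζ, ⟨m, hm⟩, hζc⟩ := (hinf.sdiff hfin).nonempty
  obtain ⟨b, -, hb⟩ := (Nat.dvd_prime_pow hp).mp (orderOf_dvd_of_pow_eq_one hm)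
  have hcb : c ≤ b := by
    by_contra! hbc
    exact hζc (orderOf_dvd_iff_pow_eq_one.mp (hb ▸ pow_dvd_pow p hbc.le))
  refine ⟨ζ ^ p ^ (b - c), (hb ▸ IsPrimitiveRoot.orderOf ζ).pow (pow_pos hp.pos b) ?_⟩
  rw [← pow_add, Nat.sub_add_cancel hcb]

theorem exists_pow_prime_pow_eq_of_pow_prime_pow_eq_one (hp : p.Prime)
    (hinf : {ζ : Fˣ | ∃ n : ℕ, ζ ^ p ^ n = 1}.Infinite) (a n : ℕ) {w : Fˣ}
    (hw : w ^ p ^ a = 1) : ∃ η : Fˣ, η ^ p ^ n = w := by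
  have : NeZero (p ^ a) := ⟨pow_ne_zero a hp.ne_zero⟩
  obtain ⟨ξ, hξ⟩ := exists_isPrimitiveRoot_prime_pow hp hinf (n + a)
  obtain ⟨i, -, hi⟩ :=
    (hξ.pow (pow_pos hp.pos _) (pow_add p n a)).eq_pow_of_mem_rootsOfUnity hw
  exact ⟨ξ ^ i, by rw [← pow_mul, mul_comm, pow_mul, hi]⟩

end RootsOfUnity

theorem torsion_of_padicCompletion_trivial_general (p : ℕ) [Fact p.Prime]
    (F : Type*) [Field F]
    (hinf : {ζ : Fˣ | ∃ n : ℕ, ζ ^ p ^ n = 1}.Infinite)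
    (f : ∀ n : ℕ, Fˣ ⧸ (powMonoidHom (p ^ n) : Fˣ →* Fˣ).range)
    (hf : f ∈ padicCompletion p Fˣ) (htor : ∃ k : ℕ, k ≠ 0 ∧ f ^ k = 1) :
    f = 1 := by
  obtain ⟨k, hk, hfk⟩ := htor
  exact padicCompletion.eq_one_of_pow_eq_one Fact.out
    (fun a n _ => exists_pow_prime_pow_eq_of_pow_prime_pow_eq_one Fact.out hinf a n) hf hk hfk

/-- If `F` is a field of characteristic different from `p` whose group of `p`-power roots
of unity is infinite (hence `p`-divisible), then the torsion subgroup of the `p`-adic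
completion `lim_n F*/(F*)^{p^n}` of `F*` is trivial. -/
theorem torsion_of_padicCompletion_trivial (p : ℕ) [Fact p.Prime]
    (F : Type*) [Field F] (hchar : (p : F) ≠ 0)
    (hinf : {ζ : Fˣ | ∃ n : ℕ, ζ ^ p ^ n = 1}.Infinite)
    (f : ∀ n : ℕ, Fˣ ⧸ (powMonoidHom (p ^ n) : Fˣ →* Fˣ).range)
    (hf : f ∈ padicCompletion p Fˣ) (htor : ∃ k : ℕ, k ≠ 0 ∧ f ^ k = 1) :
    f = 1 :=
  torsion_of_padicCompletion_trivial_general p F hinf f hf htor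
end

section
/- Let F be a number field, Q a finite set of finite places, and p a prime. An element x̄ of the p-adic completion of F* lies in the (image of the) p-adic completion of the Q-units E_Q if and only if v_q(x̄) = 0 for every finite place q ∉ Q, where v_q denotes the map on p-adic completions induced by the normalized valuation at q. -/
open IsDedekindDomain NumberField

/-- A group homomorphism sends `p^n`-th powers to `p^n`-th powers; this lets the identity
(resp. an inclusion) induce maps between the quotients `M/M^{p^n}`. -/
theorem map_pow_range_le {G H : Type*} [CommGroup G] [CommGroup H] (φ : G →* H) (k : ℕ) :
    (powMonoidHom k : G →* G).range ≤ Subgroup.comap φ (powMonoidHom k : H →* H).range := by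
  rintro x ⟨y, rfl⟩
  exact ⟨φ y, by simp [powMonoidHom_apply]⟩

/-- The group `E_Q` of `Q`-units of a number field `F`: elements of `F*` whose valuation
is trivial at every finite place outside `Q`. -/
def QUnits (F : Type*) [Field F] [NumberField F]
    (Q : Set (HeightOneSpectrum (𝓞 F))) : Subgroup Fˣ where
  carrier := {x | ∀ v ∉ Q, v.valuation F (x : F) = 1}
  mul_mem' := by
    intro a b ha hb v hv
    rw [Units.val_mul, map_mul, ha v hv, hb v hv, one_mul]
  one_mem' := by
    intro v hv
    simp
  inv_mem' := by
    intro a ha v hv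
    rw [Units.val_inv_eq_inv_val, map_inv₀, ha v hv, inv_one]

/-- The additive valuation `v_q : F* → ℤ` at a finite place `q` of a number field. -/
noncomputable def zval {F : Type*} [Field F] [NumberField F]
    (v : HeightOneSpectrum (𝓞 F)) (x : Fˣ) : ℤ :=
  - Multiplicative.toAdd (WithZero.unzero
      ((Valuation.ne_zero_iff _).mpr (Units.ne_zero x) : v.valuation F (x : F) ≠ 0))

theorem Subgroup.pow_prime_pow_index_mem {G : Type*} [Group G] (H : Subgroup G) [H.Normal]
    [H.FiniteIndex] {p : ℕ} (hp : p.Prime) {g : G} {N : ℕ} (hg : g ^ p ^ N ∈ H) :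
    g ^ p ^ H.index ∈ H := by
  have hN : (g : G ⧸ H) ^ p ^ N = 1 := by rwa [← QuotientGroup.mk_pow, QuotientGroup.eq_one_iff]
  obtain ⟨m, -, hm⟩ := (Nat.dvd_prime_pow hp).mp (orderOf_dvd_of_pow_eq_one hN)
  have hdvd : p ^ m ∣ H.index := hm ▸ H.index_eq_card ▸ _root_.orderOf_dvd_natCard (g : G ⧸ H)
  have hle : m ≤ H.index := (Nat.lt_pow_self hp.one_lt).le.trans
    (Nat.le_of_dvd (Nat.pos_of_ne_zero FiniteIndex.index_ne_zero) hdvd)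
  rw [← QuotientGroup.eq_one_iff, QuotientGroup.mk_pow, ← orderOf_dvd_iff_pow_eq_one, hm]
  exact pow_dvd_pow p hle

section PadicCompletion

variable {M : Type*} [CommGroup M] {p : ℕ}

theorem mk_eq_of_mem_padicCompletion {f : ∀ n : ℕ, M ⧸ (powMonoidHom (p ^ n) : M →* M).range}
    (hf : f ∈ padicCompletion p M) {m n : ℕ} (hmn : m ≤ n) {x : M}
    (hx : (QuotientGroup.mk x : M ⧸ (powMonoidHom (p ^ n) : M →* M).range) = f n) :
    (QuotientGroup.mk x : M ⧸ (powMonoidHom (p ^ m) : M →* M).range) = f m := by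
  induction n, hmn using Nat.le_induction with
  | base => exact hx
  | succ n _ ih => exact ih (by rw [← hf n, ← hx]; rfl)

theorem mk_eq_mk_of_pow_mem_imp_mem {H : Subgroup M} {k : ℕ} (hH : ∀ y : M, y ^ k ∈ H → y ∈ H)
    {u w : H}
    (h : (QuotientGroup.mk (u : M) : M ⧸ (powMonoidHom k : M →* M).range) =
      QuotientGroup.mk (w : M)) :
    (QuotientGroup.mk u : H ⧸ (powMonoidHom k : H →* H).range) = QuotientGroup.mk w := by
  rw [QuotientGroup.eq] at h ⊢
  obtain ⟨y, hy⟩ := h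
  rw [powMonoidHom_apply] at hy
  have hyH : y ∈ H := hH y (hy ▸ H.mul_mem (H.inv_mem u.2) w.2)
  exact ⟨⟨y, hyH⟩, Subtype.ext hy⟩

theorem exists_padicCompletion_map_eq_iff {H : Subgroup M}
    (hH : ∀ n (y : M), y ^ p ^ n ∈ H → y ∈ H)
    {f : ∀ n : ℕ, M ⧸ (powMonoidHom (p ^ n) : M →* M).range} (hf : f ∈ padicCompletion p M) :
    (∃ g ∈ padicCompletion p H,
        ∀ n, QuotientGroup.map _ _ H.subtype (map_pow_range_le H.subtype (p ^ n)) (g n) = f n) ↔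
      ∀ n, ∃ u ∈ H, (QuotientGroup.mk u : M ⧸ (powMonoidHom (p ^ n) : M →* M).range) = f n := by
  constructor
  · rintro ⟨g, -, hgf⟩ n
    obtain ⟨u, hu⟩ := QuotientGroup.mk_surjective (g n)
    exact ⟨u, u.2, by rw [← hgf n, ← hu]; rfl⟩
  · intro h
    choose u hu huf using h
    refine ⟨fun n => QuotientGroup.mk ⟨u n, hu n⟩, fun n => ?_, fun n => huf n⟩
    exact mk_eq_mk_of_pow_mem_imp_mem (hH n)
      ((mk_eq_of_mem_padicCompletion hf n.le_succ (huf (n + 1))).trans (huf n).symm)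

end PadicCompletion

namespace IsDedekindDomain

open FractionalIdeal HeightOneSpectrum
open scoped nonZeroDivisors

variable {R : Type*} [CommRing R] [IsDedekindDomain R] {K : Type*} [Field K] [Algebra R K]
  [IsFractionRing R K]

section Count

variable (v : HeightOneSpectrum R)

theorem count_units_mul (I J : (FractionalIdeal R⁰ K)ˣ) :
    count K v ↑(I * J) = count K v I + count K v J := by
  rw [Units.val_mul, count_mul K v I.ne_zero J.ne_zero]

theorem count_units_inv (I : (FractionalIdeal R⁰ K)ˣ) : count K v ↑I⁻¹ = -count K v I := by
  rw [Units.val_inv_eq_inv_val, count_inv]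

theorem count_units_pow (I : (FractionalIdeal R⁰ K)ˣ) (n : ℕ) :
    count K v ↑(I ^ n) = n * count K v I := by
  rw [Units.val_pow_eq_pow_val, count_pow]

theorem count_spanSingleton_algebraMap {r : R} (hr : r ≠ 0) :
    count K v (spanSingleton R⁰ (algebraMap R K r)) =
      -WithZero.log (v.valuation K (algebraMap R K r)) := by
  rw [← coeIdeal_span_singleton, count_coe K v (by simpa using hr), valuation_of_algebraMap,
    intValuation_if_neg _ hr, WithZero.log_exp, neg_neg]

theorem count_toPrincipalIdeal (x : Kˣ) :
    count K v (toPrincipalIdeal R K x) = -WithZero.log (v.valuation K x) := by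
  obtain ⟨r, s, hs, hx⟩ := IsFractionRing.div_surjective (A := R) (x : K)
  have hs' : s ≠ 0 := nonZeroDivisors.ne_zero hs
  have hs0 : algebraMap R K s ≠ 0 := IsFractionRing.to_map_ne_zero_of_mem_nonZeroDivisors hs
  have hr0 : algebraMap R K r ≠ 0 := fun h => x.ne_zero (by rw [← hx, h, zero_div])
  have hr : r ≠ 0 := fun h => hr0 (by rw [h, map_zero])
  have hxrs : x = Units.mk0 _ hr0 * (Units.mk0 _ hs0)⁻¹ :=
    Units.ext (by simp [← hx, div_eq_mul_inv])
  rw [hxrs, map_mul, map_inv, count_units_mul, count_units_inv, coe_toPrincipalIdeal,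
    coe_toPrincipalIdeal, Units.val_mk0, Units.val_mk0, count_spanSingleton_algebraMap v hr,
    count_spanSingleton_algebraMap v hs', Units.val_mul, Units.val_inv_eq_inv_val, Units.val_mk0,
    Units.val_mk0, map_mul, map_inv₀, WithZero.log_mul, WithZero.log_inv]
  · ring
  all_goals simp [hr0, hs0]

end Count

variable (K) in
def supportedIdeals (S : Set (HeightOneSpectrum R)) : Subgroup (FractionalIdeal R⁰ K)ˣ where
  carrier := {I | ∀ v ∉ S, count K v I = 0}
  mul_mem' hI hJ v hv := by rw [count_units_mul, hI v hv, hJ v hv, add_zero]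
  one_mem' v _ := count_one K v
  inv_mem' hI v hv := by rw [count_units_inv, hI v hv, neg_zero]

theorem pow_mem_supportedIdeals_iff {S : Set (HeightOneSpectrum R)} {I : (FractionalIdeal R⁰ K)ˣ}
    {m : ℕ} (hm : m ≠ 0) : I ^ m ∈ supportedIdeals K S ↔ I ∈ supportedIdeals K S :=
  forall₂_congr fun v _ => by
    rw [count_units_pow, mul_eq_zero, Nat.cast_eq_zero, or_iff_right hm]

theorem exists_units_count_eq (e : HeightOneSpectrum R → ℤ)
    (he : ∀ᶠ v in Filter.cofinite, e v = 0) :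
    ∃ J : (FractionalIdeal R⁰ K)ˣ, ∀ v, count K v J = e v := by
  have hJ : ∏ᶠ v : HeightOneSpectrum R, (v.asIdeal : FractionalIdeal R⁰ K) ^ e v ≠ 0 :=
    finprod_induction (· ≠ 0) one_ne_zero (fun _ _ => mul_ne_zero)
      fun v => zpow_ne_zero _ (coeIdeal_ne_zero.mpr v.ne_bot)
  exact ⟨Units.mk0 _ hJ, fun v => count_finprod K v e he⟩

theorem exists_mul_pow_inv_mem_supportedIdeals [Finite (ClassGroup R)] {p : ℕ} (hp : p.Prime)
    {S : Set (HeightOneSpectrum R)} (n : ℕ) (x : Kˣ)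
    (hx : ∀ v ∉ S, (p : ℤ) ^ (n + (supportedIdeals K S ⊔ (toPrincipalIdeal R K).range).index) ∣
      count K v (toPrincipalIdeal R K x)) :
    ∃ y : Kˣ, toPrincipalIdeal R K (x * (y ^ p ^ n)⁻¹) ∈ supportedIdeals K S := by
  set H := supportedIdeals K S ⊔ (toPrincipalIdeal R K).range
  set k := H.index
  set X := toPrincipalIdeal R K x
  have : Finite ((FractionalIdeal R⁰ K)ˣ ⧸ (toPrincipalIdeal R K).range) :=
    (ClassGroup.equiv K).finite_iff.mp inferInstance
  have : (toPrincipalIdeal R K).range.FiniteIndex := Subgroup.finiteIndex_of_finite_quotient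
  have : H.FiniteIndex := Subgroup.finiteIndex_of_le le_sup_right
  obtain ⟨J, hJ⟩ := exists_units_count_eq (K := K) (fun v => count K v X / (p : ℤ) ^ (n + k))
    ((finite_factors (X : FractionalIdeal R⁰ K)).mono fun v h => by rw [h, Int.zero_ediv])
  have hXJ : ∀ v ∉ S, count K v X = p ^ (n + k) * count K v J := fun v hv => by
    rw [hJ, Int.mul_ediv_cancel' (hx v hv)]
  have hJH : J ^ p ^ (n + k) ∈ H := by
    have hsupp : X * (J ^ p ^ (n + k))⁻¹ ∈ supportedIdeals K S := fun v hv => by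
      rw [count_units_mul, count_units_inv, count_units_pow, hXJ v hv]
      push_cast
      ring
    rw [show J ^ p ^ (n + k) = (X * (J ^ p ^ (n + k))⁻¹)⁻¹ * X by group]
    exact H.mul_mem (H.inv_mem (le_sup_left (a := supportedIdeals K S) hsupp))
      (le_sup_right (b := (toPrincipalIdeal R K).range) ⟨x, rfl⟩)
  obtain ⟨B, hB, _, ⟨y, rfl⟩, hBy⟩ := Subgroup.mem_sup.mp (H.pow_prime_pow_index_mem hp hJH)
  refine ⟨y, fun v hv => ?_⟩
  have hy : toPrincipalIdeal R K y = B⁻¹ * J ^ p ^ k := eq_inv_mul_of_mul_eq hBy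
  rw [map_mul, map_inv, map_pow, hy, count_units_mul, count_units_inv, count_units_pow,
    count_units_mul, count_units_inv, count_units_pow, hB v hv, hXJ v hv]
  push_cast
  ring

end IsDedekindDomain

section NumberField

open FractionalIdeal

variable {F : Type*} [Field F] [NumberField F]

theorem zval_eq_count (v : HeightOneSpectrum (𝓞 F)) (x : Fˣ) :
    zval v x = count F v (toPrincipalIdeal (𝓞 F) F x) := by
  rw [zval, WithZero.toAdd_unzero_eq_log, count_toPrincipalIdeal]

theorem QUnits_eq_comap (Q : Set (HeightOneSpectrum (𝓞 F))) :
    QUnits F Q = (supportedIdeals F Q).comap (toPrincipalIdeal (𝓞 F) F) := by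
  ext x
  refine forall₂_congr fun v _ => ?_
  rw [count_toPrincipalIdeal, neg_eq_zero, ← WithZero.exp_eq_one, WithZero.exp_log (by simp)]

theorem pow_mem_QUnits_iff {Q : Set (HeightOneSpectrum (𝓞 F))} {y : Fˣ} {m : ℕ} (hm : m ≠ 0) :
    y ^ m ∈ QUnits F Q ↔ y ∈ QUnits F Q := by
  rw [QUnits_eq_comap, Subgroup.mem_comap, Subgroup.mem_comap, map_pow,
    pow_mem_supportedIdeals_iff hm]

theorem dvd_zval_of_mk_eq {Q : Set (HeightOneSpectrum (𝓞 F))} {v : HeightOneSpectrum (𝓞 F)}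
    (hv : v ∉ Q) {m : ℕ} {u x : Fˣ} (hu : u ∈ QUnits F Q)
    (h : (QuotientGroup.mk u : Fˣ ⧸ (powMonoidHom m : Fˣ →* Fˣ).range) = QuotientGroup.mk x) :
    (m : ℤ) ∣ zval v x := by
  obtain ⟨y, hy⟩ := QuotientGroup.eq.mp h
  rw [QUnits_eq_comap] at hu
  refine ⟨zval v y, ?_⟩
  rw [show x = u * y ^ m by rw [powMonoidHom_apply] at hy; rw [hy, mul_inv_cancel_left],
    zval_eq_count, zval_eq_count, map_mul, map_pow, count_units_mul, count_units_pow, hu v hv,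
    zero_add]

end NumberField

theorem mem_completion_QUnits_iff_general (p : ℕ) [Fact p.Prime]
    (F : Type*) [Field F] [NumberField F]
    (Q : Set (HeightOneSpectrum (𝓞 F)))
    (f : ∀ n : ℕ, Fˣ ⧸ (powMonoidHom (p ^ n) : Fˣ →* Fˣ).range)
    (hf : f ∈ padicCompletion p Fˣ) :
    (∃ g ∈ padicCompletion p (QUnits F Q),
        ∀ n, QuotientGroup.map _ _ (QUnits F Q).subtype
          (map_pow_range_le (QUnits F Q).subtype (p ^ n)) (g n) = f n) ↔
      ∀ v ∉ Q, ∀ (n : ℕ) (x : Fˣ),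
        (QuotientGroup.mk x : Fˣ ⧸ (powMonoidHom (p ^ n) : Fˣ →* Fˣ).range) = f n →
          (p : ℤ) ^ n ∣ zval v x := by
  have hp : p.Prime := Fact.out
  rw [exists_padicCompletion_map_eq_iff
    (fun n y => (pow_mem_QUnits_iff (pow_ne_zero n hp.ne_zero)).mp) hf]
  constructor
  · rintro h v hv n x hx
    obtain ⟨u, hu, hux⟩ := h n
    exact_mod_cast dvd_zval_of_mk_eq hv hu (hux.trans hx.symm)
  · intro h n
    obtain ⟨x, hx⟩ := QuotientGroup.mk_surjective
      (f (n + (supportedIdeals F Q ⊔ (toPrincipalIdeal (𝓞 F) F).range).index))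
    obtain ⟨y, hy⟩ := exists_mul_pow_inv_mem_supportedIdeals hp n x
      fun v hv => zval_eq_count v x ▸ h v hv _ x hx
    refine ⟨x * (y ^ p ^ n)⁻¹, QUnits_eq_comap Q ▸ hy, ?_⟩
    have hpow : y ^ p ^ n ∈ (powMonoidHom (p ^ n) : Fˣ →* Fˣ).range := ⟨y, rfl⟩
    rw [QuotientGroup.mk_mul_of_mem _ (inv_mem hpow)]
    exact mk_eq_of_mem_padicCompletion hf (Nat.le_add_right n _) hx

/-- Let `F` be a number field, `Q` a finite set of finite places and `p` a prime.  An
element `f` of the `p`-adic completion of `F*` lies in the image of the `p`-adic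
completion of the `Q`-units `E_Q` if and only if `v_q(f) = 0` in `ℤ_p` for every finite
place `q ∉ Q` — i.e. iff for every `n` and every representative `x` of the `n`-th
component of `f`, the valuation `v_q(x)` is divisible by `p^n`. -/
theorem mem_completion_QUnits_iff (p : ℕ) [Fact p.Prime]
    (F : Type*) [Field F] [NumberField F]
    (Q : Set (HeightOneSpectrum (𝓞 F))) (hQ : Q.Finite)
    (f : ∀ n : ℕ, Fˣ ⧸ (powMonoidHom (p ^ n) : Fˣ →* Fˣ).range)
    (hf : f ∈ padicCompletion p Fˣ) :
    (∃ g ∈ padicCompletion p (QUnits F Q),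
        ∀ n, QuotientGroup.map _ _ (QUnits F Q).subtype
          (map_pow_range_le (QUnits F Q).subtype (p ^ n)) (g n) = f n) ↔
      ∀ v ∉ Q, ∀ (n : ℕ) (x : Fˣ),
        (QuotientGroup.mk x : Fˣ ⧸ (powMonoidHom (p ^ n) : Fˣ →* Fˣ).range) = f n →
          (p : ℤ) ^ n ∣ zval v x :=
  mem_completion_QUnits_iff_general p F Q f hf
end

section
/- Let 1 → L → G → H → 1 be an extension of profinite groups with L ≅ Z_p^d, H a finite p-group acting trivially on L. If the extension class in H^2(H, L) becomes trivial after pushing out along an injection L ↪ L' of free rank-d Z_p-modules, then there is a continuous morphism G → L' restricting on L to the given inclusion; conversely, any surjective continuous morphism G → L'' onto a free rank-d Z_p-module restricts injectively to L and trivializes the pushout extension. -/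
/-!
A retraction `r` of the pushout gives the morphism `g ↦ r (1, g)`; conversely a morphism `ψ`
gives the retraction `(a, g) ↦ a · ψ g`. For injectivity, the restriction of `ψ` to
`L ≅ ℤ_p^d` is additive and continuous, hence `ℤ_p`-linear, and its image contains
`|H| · ℤ_p^d` because `g ^ |H| ∈ L` for every `g`. A linear endomorphism `f` of `ℤ_p^d` with
`f ∘ g = c • id`, `c ≠ 0`, has nonzero determinant, hence is injective.
-/

open Multiplicative

theorem LinearMap.injective_of_forall_smul_mem_range {R ι : Type*} [CommRing R] [IsDomain R]
    [Fintype ι] [DecidableEq ι] (f : (ι → R) →ₗ[R] ι → R) {c : R} (hc : c ≠ 0)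
    (h : ∀ x, ∃ y, f y = c • x) : Function.Injective f := by
  choose s hs using h
  let g : (ι → R) →ₗ[R] ι → R := (Pi.basisFun R ι).constr R fun i => s (Pi.basisFun R ι i)
  have hfg : f ∘ₗ g = c • LinearMap.id := (Pi.basisFun R ι).ext fun i => by simp [g, hs]
  have hdet : LinearMap.det f ≠ 0 := by
    intro h0
    have := congrArg LinearMap.det hfg
    rw [LinearMap.det_comp, h0, zero_mul, LinearMap.det_smul, LinearMap.det_id, mul_one] at this
    exact pow_ne_zero _ hc this.symm
  rw [← Matrix.toLin'_toMatrix' f]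
  exact Matrix.mulVec_injective_of_det_ne_zero (by rwa [LinearMap.det_toMatrix'])

section PadicInt

variable {p : ℕ} [Fact p.Prime]

theorem map_padicInt_smul {E F G : Type*} [AddCommMonoid E] [Module ℤ_[p] E]
    [TopologicalSpace E] [ContinuousSMul ℤ_[p] E] [AddCommMonoid F] [Module ℤ_[p] F]
    [TopologicalSpace F] [T2Space F] [ContinuousSMul ℤ_[p] F]
    [FunLike G E F] [AddMonoidHomClass G E F] (f : G) (hf : Continuous f) (c : ℤ_[p]) (x : E) :
    f (c • x) = c • f x :=
  congr_fun (PadicInt.denseRange_natCast.equalizer (hf.comp (continuous_id.smul continuous_const))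
    (continuous_id.smul continuous_const) (funext fun n => by simp [Nat.cast_smul_eq_nsmul])) c

theorem PadicInt.injective_of_forall_nsmul_mem_range {ι : Type*} [Fintype ι]
    (f : (ι → ℤ_[p]) →+ ι → ℤ_[p]) (hf : Continuous f) {n : ℕ} (hn : n ≠ 0)
    (h : ∀ x, ∃ y, f y = n • x) : Function.Injective f := by
  classical
  let fₗ : (ι → ℤ_[p]) →ₗ[ℤ_[p]] ι → ℤ_[p] :=
    { f with map_smul' := map_padicInt_smul f hf }
  exact fₗ.injective_of_forall_smul_mem_range (Nat.cast_ne_zero.2 hn)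
    fun x => (h x).imp fun _ hy => by rwa [Nat.cast_smul_eq_nsmul]

end PadicInt

theorem MonoidHom.exists_mem_ker_apply_eq_pow_card {G H A : Type*} [Group G] [Group H] [Finite H]
    [Monoid A] (π : G →* H) (ψ : G →* A) (hψ : Function.Surjective ψ) (a : A) :
    ∃ k : π.ker, ψ k = a ^ Nat.card H := by
  obtain ⟨g, rfl⟩ := hψ a
  exact ⟨⟨g ^ Nat.card H, by rw [mem_ker, map_pow, pow_card_eq_one']⟩, map_pow ψ g _⟩

theorem MonoidHom.apply_inr_eq_of_apply_inv_mk_eq_one {A G : Type*} [Group A] [Monoid G]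
    (r : A × G →* A) (hr : ∀ a, r (a, 1) = a) {a : A} {g : G} (h : r (a⁻¹, g) = 1) :
    r (1, g) = a := by
  rw [show (a⁻¹, g) = (a⁻¹, 1) * (1, g) by simp, map_mul, hr] at h
  exact (inv_mul_eq_one.1 h).symm

theorem pushout_trivial_iff_morphism_general (p : ℕ) [Fact p.Prime] (d : ℕ)
    (G : Type*) [Group G] [TopologicalSpace G]
    (H : Type*) [Group H] [Finite H]
    (π : G →* H)
    (e : π.ker ≃* Multiplicative (Fin d → ℤ_[p]))
    (hesymm : Continuous e.symm)
    (ι : (Fin d → ℤ_[p]) →ₗ[ℤ_[p]] (Fin d → ℤ_[p])) :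
    -- (a)
    ((∃ r : Multiplicative (Fin d → ℤ_[p]) × G →* Multiplicative (Fin d → ℤ_[p]),
        Continuous r ∧ (∀ a, r (a, 1) = a) ∧
        ∀ k : π.ker,
          r ((Multiplicative.ofAdd (ι (Multiplicative.toAdd (e k))))⁻¹, (k : G)) = 1) →
      ∃ ψ : G →* Multiplicative (Fin d → ℤ_[p]), Continuous ψ ∧
        ∀ k : π.ker, ψ (k : G) = Multiplicative.ofAdd (ι (Multiplicative.toAdd (e k)))) ∧
    -- (b)
    ∀ ψ : G →* Multiplicative (Fin d → ℤ_[p]), Continuous ψ → Function.Surjective ψ →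
      (Function.Injective fun k : π.ker => ψ (k : G)) ∧
      ∃ r : Multiplicative (Fin d → ℤ_[p]) × G →* Multiplicative (Fin d → ℤ_[p]),
        Continuous r ∧ (∀ a, r (a, 1) = a) ∧
        ∀ k : π.ker, r ((ψ (k : G))⁻¹, (k : G)) = 1 := by
  constructor
  · rintro ⟨r, hrc, hr1, hrk⟩
    exact ⟨r.comp (MonoidHom.inr _ G), hrc.comp (continuous_const.prodMk continuous_id),
      fun k => r.apply_inr_eq_of_apply_inv_mk_eq_one hr1 (hrk k)⟩
  · intro ψ hψc hψs
    refine ⟨?_, (MonoidHom.id _).coprod ψ, continuous_fst.mul (hψc.comp continuous_snd),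
      fun a => by simp, fun k => by simp⟩
    let f : (Fin d → ℤ_[p]) →+ Fin d → ℤ_[p] :=
      AddMonoidHom.toMultiplicative.symm ((ψ.comp π.ker.subtype).comp e.symm.toMonoidHom)
    have hf : Continuous f :=
      continuous_toAdd.comp (hψc.comp (continuous_subtype_val.comp (hesymm.comp continuous_ofAdd)))
    have hfinj : Function.Injective f :=
      PadicInt.injective_of_forall_nsmul_mem_range f hf (Nat.card_pos (α := H)).ne' fun x => by
        obtain ⟨k, hk⟩ := π.exists_mem_ker_apply_eq_pow_card ψ hψs (ofAdd x)
        exact ⟨toAdd (e k), by simp [f, hk]⟩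
    intro k₁ k₂ h
    exact e.injective (toAdd.injective (hfinj (by simpa [f] using congrArg toAdd h)))

/-- Let `1 → L → G → H → 1` be an extension of profinite groups with `L ≅ ℤ_p^d`
(via `e`), `H` a finite `p`-group acting trivially on `L` (`L` central in `G`).
The pushout of the extension along an injection `ι : L ↪ L'` of free rank-`d`
`ℤ_p`-modules is the quotient of `L' × G` by the elements `(ι(l)⁻¹, l)`, `l ∈ L`;
its class in `H²(H, L')` is trivial iff there is a continuous retraction
`r : L' × G → L'` with `r(a,1) = a` killing all `(ι(l)⁻¹, l)`.

(a) If the extension class becomes trivial after pushing out along `ι`, then there is a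
continuous morphism `G → L'` restricting on `L` to `ι`; conversely
(b) any surjective continuous morphism `G → L''` onto a free rank-`d` `ℤ_p`-module
restricts injectively to `L` and trivializes the pushout along that restriction. -/
theorem pushout_trivial_iff_morphism (p : ℕ) [Fact p.Prime] (d : ℕ)
    (G : Type*) [Group G] [TopologicalSpace G] [IsTopologicalGroup G]
    [CompactSpace G] [TotallyDisconnectedSpace G]
    (H : Type*) [Group H] [Finite H] [TopologicalSpace H] [DiscreteTopology H]
    (hH : IsPGroup p H)
    (π : G →* H) (hπcont : Continuous π) (hπsurj : Function.Surjective π)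
    (e : π.ker ≃* Multiplicative (Fin d → ℤ_[p]))
    (hecont : Continuous e) (hesymm : Continuous e.symm)
    (htriv : ∀ (g : G) (k : π.ker), g * (k : G) * g⁻¹ = (k : G))
    (ι : (Fin d → ℤ_[p]) →ₗ[ℤ_[p]] (Fin d → ℤ_[p])) (hι : Function.Injective ι) :
    -- (a)
    ((∃ r : Multiplicative (Fin d → ℤ_[p]) × G →* Multiplicative (Fin d → ℤ_[p]),
        Continuous r ∧ (∀ a, r (a, 1) = a) ∧
        ∀ k : π.ker,
          r ((Multiplicative.ofAdd (ι (Multiplicative.toAdd (e k))))⁻¹, (k : G)) = 1) →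
      ∃ ψ : G →* Multiplicative (Fin d → ℤ_[p]), Continuous ψ ∧
        ∀ k : π.ker, ψ (k : G) = Multiplicative.ofAdd (ι (Multiplicative.toAdd (e k)))) ∧
    -- (b)
    ∀ ψ : G →* Multiplicative (Fin d → ℤ_[p]), Continuous ψ → Function.Surjective ψ →
      (Function.Injective fun k : π.ker => ψ (k : G)) ∧
      ∃ r : Multiplicative (Fin d → ℤ_[p]) × G →* Multiplicative (Fin d → ℤ_[p]),
        Continuous r ∧ (∀ a, r (a, 1) = a) ∧
        ∀ k : π.ker, r ((ψ (k : G))⁻¹, (k : G)) = 1 :=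
  pushout_trivial_iff_morphism_general p d G H π e hesymm ι
end
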